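/- Let d ≥ 2 and let C ⊆ ℝ^{d−1} be a finite set. If (v_1, v_2) ∈ ℝ^{d−1} × ℝ^{d−1} is a good pair for C, then the number of distinct orderings Σ̌_{(v_1, v_2, x, y)}^{C,C}, as (x, y) ranges over ℝ × ℝ_{>0} (restricted to values for which the ordering is defined), is at least Γ(v_1, v_2). -/

import Mathlib

/-- The function `Ď_{V̌}` for `V̌ = (v̌_1, v̌_2, x̌, y̌)`, on the disjoint union
`ℝ^{d−1} ⊔ ℝ^{d−1}` (left summand for points of `Č_1`, right for `Č_2`):
`Ď¹_{V̌}(č) = √(x̌² + ‖č − v̌_1‖²) − x̌` on the left, and `Ď²_{V̌}(č) = y̌ ‖č − v̌_2‖²`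
on the right. -/
noncomputable def Dcheck {e : ℕ} (v₁ v₂ : EuclideanSpace ℝ (Fin e)) (x y : ℝ) :
    EuclideanSpace ℝ (Fin e) ⊕ EuclideanSpace ℝ (Fin e) → ℝ
  | Sum.inl c => Real.sqrt (x ^ 2 + dist c v₁ ^ 2) - x
  | Sum.inr c => y * dist c v₂ ^ 2

/-- `Ψ̌(Č_1, Č_2)`: the set of orderings of `Č_1 ⊔ Č_2` (injective enumerations
`σ : Fin n → ℝ^{d−1} ⊕ ℝ^{d−1}`, left components in `Č_1`, right in `Č_2`) along which
`Ď_{V̌}` is strictly increasing, for some `V̌ = (v̌_1, v̌_2, x̌, y̌)` with `y̌ > 0`. -/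
def PsiCheckSet {e : ℕ} (n : ℕ) (C₁ C₂ : Finset (EuclideanSpace ℝ (Fin e))) :
    Set (Fin n → (EuclideanSpace ℝ (Fin e) ⊕ EuclideanSpace ℝ (Fin e))) :=
  {σ | Function.Injective σ ∧
    (∀ i, Sum.elim (fun c => c ∈ C₁) (fun c => c ∈ C₂) (σ i)) ∧
    ∃ (v₁ v₂ : EuclideanSpace ℝ (Fin e)) (x y : ℝ), 0 < y ∧
      StrictMono fun i => Dcheck v₁ v₂ x y (σ i)}

/-- `ψ̌(Č_1, Č_2) = |Ψ̌(Č_1, Č_2)|`. -/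
noncomputable def psiCheck {e : ℕ} (C₁ C₂ : Finset (EuclideanSpace ℝ (Fin e))) : ℕ :=
  Nat.card (PsiCheckSet (C₁.card + C₂.card) C₁ C₂)

/-- `ϑ_a(x) = √(x² + a²) − x`. -/
noncomputable def theta (a x : ℝ) : ℝ := Real.sqrt (x ^ 2 + a ^ 2) - x

/-- `Δ(v) = {‖v − c₁‖²/‖v − c₂‖² : c₁, c₂ ∈ C, ‖v − c₁‖ > ‖v − c₂‖}`. -/
def DeltaSet {e : ℕ} (C : Finset (EuclideanSpace ℝ (Fin e)))
    (v : EuclideanSpace ℝ (Fin e)) : Set ℝ :=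
  {t | ∃ c₁ ∈ C, ∃ c₂ ∈ C, dist v c₂ < dist v c₁ ∧ t = dist v c₁ ^ 2 / dist v c₂ ^ 2}

/-- A pair `(v₁, v₂)` is good (for `C`) if: `v₁, v₂ ∉ C`; `Δ(v₁)` and `Δ(v₂)` are
disjoint and each has size `|C| choose 2`; and there do not exist `x ∈ ℝ` and
`c₁, c₂, c₃, c₄ ∈ C` with `(c₁, c₂) ≠ (c₃, c₄)`, `‖v₁ − c₁‖ > ‖v₁ − c₂‖` and
`‖v₁ − c₃‖ > ‖v₁ − c₄‖` such that `ϑ_{‖v₁−c₁‖}(x)/ϑ_{‖v₁−c₂‖}(x)` and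
`ϑ_{‖v₁−c₃‖}(x)/ϑ_{‖v₁−c₄‖}(x)` both lie in `Δ(v₂)`. -/
def GoodPair {e : ℕ} (C : Finset (EuclideanSpace ℝ (Fin e)))
    (v₁ v₂ : EuclideanSpace ℝ (Fin e)) : Prop :=
  v₁ ∉ C ∧ v₂ ∉ C ∧
  Disjoint (DeltaSet C v₁) (DeltaSet C v₂) ∧
  Nat.card (DeltaSet C v₁) = C.card.choose 2 ∧
  Nat.card (DeltaSet C v₂) = C.card.choose 2 ∧
  ¬ ∃ (x : ℝ) (c₁ c₂ c₃ c₄ : EuclideanSpace ℝ (Fin e)),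
      c₁ ∈ C ∧ c₂ ∈ C ∧ c₃ ∈ C ∧ c₄ ∈ C ∧ (c₁, c₂) ≠ (c₃, c₄) ∧
      dist v₁ c₂ < dist v₁ c₁ ∧ dist v₁ c₄ < dist v₁ c₃ ∧
      theta (dist v₁ c₁) x / theta (dist v₁ c₂) x ∈ DeltaSet C v₂ ∧
      theta (dist v₁ c₃) x / theta (dist v₁ c₄) x ∈ DeltaSet C v₂

/-- `Γ(v₁, v₂) = |{(a, b) ∈ Δ(v₁) × Δ(v₂) : a > b}|`. -/
noncomputable def Gamma {e : ℕ} (C : Finset (EuclideanSpace ℝ (Fin e)))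
    (v₁ v₂ : EuclideanSpace ℝ (Fin e)) : ℕ :=
  Nat.card {p : ℝ × ℝ | p.1 ∈ DeltaSet C v₁ ∧ p.2 ∈ DeltaSet C v₂ ∧ p.2 < p.1}

lemma sqrt_lem (a x : ℝ) (ha : 0 < a) :
    0 < Real.sqrt (x ^ 2 + a ^ 2) ∧ Real.sqrt (x ^ 2 + a ^ 2) ^ 2 = x ^ 2 + a ^ 2 ∧
    x < Real.sqrt (x ^ 2 + a ^ 2) := by
  have h1 : (0:ℝ) < x ^ 2 + a ^ 2 := by positivity
  have h2 : Real.sqrt (x ^ 2 + a ^ 2) ^ 2 = x ^ 2 + a ^ 2 := Real.sq_sqrt h1.le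
  have h3 : 0 < Real.sqrt (x ^ 2 + a ^ 2) := Real.sqrt_pos.2 h1
  refine ⟨h3, h2, ?_⟩
  nlinarith [abs_nonneg x, sq_abs x, le_abs_self x]

lemma theta_pos (a x : ℝ) (ha : 0 < a) : 0 < theta a x := by
  have := sqrt_lem a x ha
  unfold theta; linarith [this.2.2]

lemma theta_strictMonoOn (x : ℝ) {a a' : ℝ} (h0 : 0 ≤ a) (h : a < a') :
    theta a x < theta a' x := by
  unfold theta
  have : x ^ 2 + a ^ 2 < x ^ 2 + a' ^ 2 := by nlinarith
  have := Real.sqrt_lt_sqrt (by positivity) this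
  linarith

lemma theta_hasDerivAt (a x : ℝ) (ha : 0 < a) :
    HasDerivAt (theta a) (x / Real.sqrt (x ^ 2 + a ^ 2) - 1) x := by
  have h1 : (0:ℝ) < x ^ 2 + a ^ 2 := by positivity
  have hs : HasDerivAt (fun x : ℝ => x ^ 2 + a ^ 2) (2 * x) x := by
    simpa using ((hasDerivAt_pow 2 x).add_const (a ^ 2))
  have hsq : HasDerivAt (fun x : ℝ => Real.sqrt (x ^ 2 + a ^ 2))
      (2 * x / (2 * Real.sqrt (x ^ 2 + a ^ 2))) x :=
    (Real.hasDerivAt_sqrt h1.ne').comp x hs |>.congr_deriv (by ring)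
  have : HasDerivAt (theta a) (2 * x / (2 * Real.sqrt (x ^ 2 + a ^ 2)) - 1) x := by
    exact hsq.sub (hasDerivAt_id x)
  convert this using 1
  have h3 : (0:ℝ) < Real.sqrt (x ^ 2 + a ^ 2) := Real.sqrt_pos.2 h1
  field_simp

lemma ratio_strictMono {a₁ a₂ : ℝ} (h2 : 0 < a₂) (h12 : a₂ < a₁) :
    StrictMono (fun x => theta a₁ x / theta a₂ x) := by
  have h1 : 0 < a₁ := h2.trans h12
  apply strictMono_of_deriv_pos
  intro x
  obtain ⟨hs1, hs1sq, hx1⟩ := sqrt_lem a₁ x h1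
  obtain ⟨hs2, hs2sq, hx2⟩ := sqrt_lem a₂ x h2
  have hth1 := theta_pos a₁ x h1
  have hth2 := theta_pos a₂ x h2
  have hd : HasDerivAt (fun x => theta a₁ x / theta a₂ x)
      (((x / Real.sqrt (x ^ 2 + a₁ ^ 2) - 1) * theta a₂ x -
        theta a₁ x * (x / Real.sqrt (x ^ 2 + a₂ ^ 2) - 1)) / theta a₂ x ^ 2) x :=
    (theta_hasDerivAt a₁ x h1).div (theta_hasDerivAt a₂ x h2) hth2.ne'
  rw [hd.deriv]
  apply div_pos _ (by positivity)
  have e1 : x / Real.sqrt (x ^ 2 + a₁ ^ 2) - 1 = -(theta a₁ x) / Real.sqrt (x ^ 2 + a₁ ^ 2) := by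
    unfold theta; field_simp; ring
  have e2 : x / Real.sqrt (x ^ 2 + a₂ ^ 2) - 1 = -(theta a₂ x) / Real.sqrt (x ^ 2 + a₂ ^ 2) := by
    unfold theta; field_simp; ring
  rw [e1, e2]
  have hss : Real.sqrt (x ^ 2 + a₂ ^ 2) < Real.sqrt (x ^ 2 + a₁ ^ 2) := by
    apply Real.sqrt_lt_sqrt (by positivity); nlinarith
  have key : theta a₂ x / Real.sqrt (x ^ 2 + a₁ ^ 2) <
      theta a₂ x / Real.sqrt (x ^ 2 + a₂ ^ 2) := by
    exact div_lt_div_of_pos_left hth2 hs2 hss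
  have hrw : -theta a₁ x / Real.sqrt (x ^ 2 + a₁ ^ 2) * theta a₂ x -
      theta a₁ x * (-theta a₂ x / Real.sqrt (x ^ 2 + a₂ ^ 2)) =
      theta a₁ x * (theta a₂ x / Real.sqrt (x ^ 2 + a₂ ^ 2) -
        theta a₂ x / Real.sqrt (x ^ 2 + a₁ ^ 2)) := by ring
  rw [hrw]
  exact mul_pos hth1 (sub_pos.2 key)

lemma theta_continuous (a : ℝ) : Continuous (theta a) := by
  unfold theta
  exact (Real.continuous_sqrt.comp (by continuity)).sub continuous_id

lemma sqrt_upper {a t : ℝ} (ht : 0 < t) (ha : 0 < a) :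
    Real.sqrt (t ^ 2 + a ^ 2) ≤ t + a ^ 2 / (2 * t) := by
  rw [show t + a ^ 2 / (2 * t) = Real.sqrt ((t + a ^ 2 / (2 * t)) ^ 2) from
    (Real.sqrt_sq (by positivity)).symm]
  apply Real.sqrt_le_sqrt
  have : (t + a ^ 2 / (2 * t)) ^ 2 = t ^ 2 + a ^ 2 + (a ^ 2 / (2 * t)) ^ 2 := by
    field_simp; ring
  nlinarith [sq_nonneg (a ^ 2 / (2 * t))]

lemma sqrt_lower {a t : ℝ} (ht : 0 ≤ t) (ha : 0 < a) :
    t ≤ Real.sqrt (t ^ 2 + a ^ 2) := by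
  have := Real.sqrt_le_sqrt (show t ^ 2 ≤ t ^ 2 + a ^ 2 by nlinarith)
  rwa [Real.sqrt_sq ht] at this

lemma ratio_lt_at_neg {a₁ a₂ B t : ℝ} (h2 : 0 < a₂) (h12 : a₂ < a₁) (hB1 : 1 < B)
    (ht : 0 < t) (htB : a₁ ^ 2 < 4 * t ^ 2 * (B - 1)) :
    theta a₁ (-t) / theta a₂ (-t) < B := by
  have h1 : 0 < a₁ := h2.trans h12
  have hth2 := theta_pos a₂ (-t) h2
  rw [div_lt_iff₀ hth2]
  have e1 : theta a₁ (-t) = Real.sqrt (t ^ 2 + a₁ ^ 2) + t := by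
    unfold theta; rw [neg_pow]; ring_nf
  have e2 : theta a₂ (-t) = Real.sqrt (t ^ 2 + a₂ ^ 2) + t := by
    unfold theta; rw [neg_pow]; ring_nf
  rw [e1, e2]
  have hub := sqrt_upper ht h1
  have hlb := sqrt_lower ht.le h2
  have key : a₁ ^ 2 / (2 * t) < 2 * t * (B - 1) := by
    rw [div_lt_iff₀ (by linarith)]; nlinarith
  have hint : 0 ≤ B * (Real.sqrt (t ^ 2 + a₂ ^ 2) - t) :=
    mul_nonneg (by linarith) (by linarith)
  nlinarith [hint]

set_option maxHeartbeats 1000000 in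
lemma ratio_gt_at_pos {a₁ a₂ B u : ℝ} (h2 : 0 < a₂) (h12 : a₂ < a₁) (hB1 : 1 < B)
    (hu : 0 < u) (huB : B * a₁ ^ 2 * a₂ ^ 2 < 4 * u ^ 2 * (a₁ ^ 2 - B * a₂ ^ 2)) :
    B < theta a₁ u / theta a₂ u := by
  have h1 : 0 < a₁ := h2.trans h12
  have hth2 := theta_pos a₂ u h2
  rw [lt_div_iff₀ hth2]
  obtain ⟨hs1, hs1sq, hx1⟩ := sqrt_lem a₁ u h1
  obtain ⟨hs2, hs2sq, hx2⟩ := sqrt_lem a₂ u h2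
  have e1 : theta a₁ u = Real.sqrt (u ^ 2 + a₁ ^ 2) - u := rfl
  have e2 : theta a₂ u = Real.sqrt (u ^ 2 + a₂ ^ 2) - u := rfl
  rw [e1, e2]
  set s₁ := Real.sqrt (u ^ 2 + a₁ ^ 2) with hs₁
  set s₂ := Real.sqrt (u ^ 2 + a₂ ^ 2) with hs₂
  have hub : s₁ ≤ u + a₁ ^ 2 / (2 * u) := sqrt_upper hu h1
  have hp1 : (s₁ - u) * (s₁ + u) = a₁ ^ 2 := by nlinarith
  have hp2 : (s₂ - u) * (s₂ + u) = a₂ ^ 2 := by nlinarith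
  have hq1 : 2 * u * (s₁ + u) ≤ 4 * u ^ 2 + a₁ ^ 2 := by
    have h' : 2 * u * (s₁ + u) ≤ 2 * u * (u + a₁ ^ 2 / (2 * u) + u) := by nlinarith
    calc 2 * u * (s₁ + u) ≤ 2 * u * (u + a₁ ^ 2 / (2 * u) + u) := h'
      _ = 4 * u ^ 2 + a₁ ^ 2 := by field_simp; ring
  have hsu : 0 < s₁ - u := by linarith
  have h₁ : a₁ ^ 2 * (2 * u) ≤ (s₁ - u) * (4 * u ^ 2 + a₁ ^ 2) := by nlinarith
  have h₂ : (s₂ - u) * (2 * u) ≤ a₂ ^ 2 := by nlinarith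
  have hpos : (0:ℝ) < 4 * u ^ 2 + a₁ ^ 2 := by positivity
  -- goal : B * (s₂ - u) < s₁ - u
  -- (s₁-u)*(4u²+a₁²)*(2u) ≥ a₁²*4u² > B a₂²(4u²+a₁²) ≥ B (s₂-u)(2u)(4u²+a₁²)
  have c1 : a₁ ^ 2 * (2 * u) * (2 * u) ≤ (s₁ - u) * (4 * u ^ 2 + a₁ ^ 2) * (2 * u) :=
    mul_le_mul_of_nonneg_right h₁ (by linarith)
  have c2 : B * ((s₂ - u) * (2 * u)) * (4 * u ^ 2 + a₁ ^ 2) ≤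
      B * a₂ ^ 2 * (4 * u ^ 2 + a₁ ^ 2) := by
    apply mul_le_mul_of_nonneg_right _ hpos.le
    exact mul_le_mul_of_nonneg_left h₂ (by linarith)
  have hP : (0:ℝ) < 2 * u * (4 * u ^ 2 + a₁ ^ 2) := by positivity
  apply lt_of_mul_lt_mul_right _ hP.le
  calc B * (s₂ - u) * (2 * u * (4 * u ^ 2 + a₁ ^ 2))
      = B * ((s₂ - u) * (2 * u)) * (4 * u ^ 2 + a₁ ^ 2) := by ring
    _ ≤ B * a₂ ^ 2 * (4 * u ^ 2 + a₁ ^ 2) := c2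
    _ < a₁ ^ 2 * (2 * u) * (2 * u) := by nlinarith [huB]
    _ ≤ (s₁ - u) * (4 * u ^ 2 + a₁ ^ 2) * (2 * u) := c1
    _ = (s₁ - u) * (2 * u * (4 * u ^ 2 + a₁ ^ 2)) := by ring

lemma ratio_root {a₁ a₂ B : ℝ} (h2 : 0 < a₂) (h12 : a₂ < a₁) (hB1 : 1 < B)
    (hBA : B * a₂ ^ 2 < a₁ ^ 2) : ∃ e, theta a₁ e / theta a₂ e = B := by
  have h1 : 0 < a₁ := h2.trans h12
  have hcont : Continuous fun x => theta a₁ x / theta a₂ x :=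
    (theta_continuous a₁).div (theta_continuous a₂) (fun x => (theta_pos a₂ x h2).ne')
  set t : ℝ := 1 + max 1 (a₁ ^ 2 / (4 * (B - 1))) with htdef
  have ht1 : 1 ≤ t := by
    have := le_max_left (1:ℝ) (a₁ ^ 2 / (4 * (B - 1))); rw [htdef]; linarith
  have ht0 : 0 < t := by linarith
  have htB : a₁ ^ 2 < 4 * t ^ 2 * (B - 1) := by
    have h1' : a₁ ^ 2 / (4 * (B - 1)) < t := by
      have := le_max_right (1:ℝ) (a₁ ^ 2 / (4 * (B - 1))); rw [htdef]; linarith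
    rw [div_lt_iff₀ (by linarith)] at h1'
    nlinarith [mul_le_mul_of_nonneg_right (show t ≤ t ^ 2 by nlinarith)
      (show (0:ℝ) ≤ 4 * (B - 1) by linarith)]
  set u : ℝ := 1 + max 1 (B * a₁ ^ 2 * a₂ ^ 2 / (4 * (a₁ ^ 2 - B * a₂ ^ 2))) with hudef
  have hu1 : 1 ≤ u := by
    have := le_max_left (1:ℝ) (B * a₁ ^ 2 * a₂ ^ 2 / (4 * (a₁ ^ 2 - B * a₂ ^ 2)))
    rw [hudef]; linarith
  have hu0 : 0 < u := by linarith
  have huB : B * a₁ ^ 2 * a₂ ^ 2 < 4 * u ^ 2 * (a₁ ^ 2 - B * a₂ ^ 2) := by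
    have h1' : B * a₁ ^ 2 * a₂ ^ 2 / (4 * (a₁ ^ 2 - B * a₂ ^ 2)) < u := by
      have := le_max_right (1:ℝ) (B * a₁ ^ 2 * a₂ ^ 2 / (4 * (a₁ ^ 2 - B * a₂ ^ 2)))
      rw [hudef]; linarith
    rw [div_lt_iff₀ (by linarith)] at h1'
    nlinarith [mul_le_mul_of_nonneg_right (show u ≤ u ^ 2 by nlinarith)
      (show (0:ℝ) ≤ 4 * (a₁ ^ 2 - B * a₂ ^ 2) by linarith)]
  have hlow := ratio_lt_at_neg h2 h12 hB1 ht0 htB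
  have hhigh := ratio_gt_at_pos h2 h12 hB1 hu0 huB
  have hle : -t ≤ u := by linarith
  obtain ⟨e, _, he⟩ := intermediate_value_Icc hle hcont.continuousOn ⟨hlow.le, hhigh.le⟩
  exact ⟨e, he⟩

lemma delta_eq_image {α : Type*} [MetricSpace α] (C : Finset α) (v : α)
    [DecidablePred fun q : α × α => dist v q.2 < dist v q.1] :
    {t : ℝ | ∃ c₁ ∈ C, ∃ c₂ ∈ C, dist v c₂ < dist v c₁ ∧ t = dist v c₁ ^ 2 / dist v c₂ ^ 2}
      = ↑(((C ×ˢ C).filter fun q => dist v q.2 < dist v q.1).image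
          fun q => dist v q.1 ^ 2 / dist v q.2 ^ 2) := by
  ext t
  simp only [Set.mem_setOf_eq, Finset.coe_image, Set.mem_image, Finset.mem_coe,
    Finset.mem_filter, Finset.mem_product]
  constructor
  · rintro ⟨c₁, h₁, c₂, h₂, hlt, rfl⟩
    exact ⟨(c₁, c₂), ⟨⟨h₁, h₂⟩, hlt⟩, rfl⟩
  · rintro ⟨⟨c₁, c₂⟩, ⟨⟨h₁, h₂⟩, hlt⟩, rfl⟩
    exact ⟨c₁, h₁, c₂, h₂, hlt, rfl⟩

lemma two_mul_choose_two (m : ℕ) : 2 * m.choose 2 = m * (m - 1) := by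
  induction m with
  | zero => rfl
  | succ n ih =>
    rw [Nat.choose_succ_succ]
    cases n with
    | zero => rfl
    | succ k =>
      simp only [Nat.choose_one_right, Nat.succ_sub_one] at *
      rw [Nat.mul_add, ih]; ring

lemma dist_injOn_of_card {α : Type*} [MetricSpace α] (C : Finset α) (v : α)
    (hcard : Nat.card {t : ℝ | ∃ c₁ ∈ C, ∃ c₂ ∈ C, dist v c₂ < dist v c₁ ∧
      t = dist v c₁ ^ 2 / dist v c₂ ^ 2} = C.card.choose 2) :
    Set.InjOn (dist v) ↑C := by
  classical
  by_contra hinj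
  simp only [Set.InjOn, not_forall] at hinj
  obtain ⟨c, hc, c', hc', hdd, hne⟩ := hinj
  rw [Finset.mem_coe] at hc hc'
  set m := C.card with hm
  set P := (C ×ˢ C).filter fun q => dist v q.2 < dist v q.1 with hP
  set E := (C ×ˢ C).filter fun q =>
    ¬ dist v q.2 < dist v q.1 ∧ ¬ dist v q.1 < dist v q.2 with hE
  set P' := (C ×ˢ C).filter fun q => dist v q.1 < dist v q.2 with hP'
  have h1 : m.choose 2 ≤ P.card := by
    rw [← hcard, delta_eq_image, Nat.card_coe_set_eq, Set.ncard_coe_finset]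
    exact Finset.card_image_le
  have htot : P.card + (P'.card + E.card) = m * m := by
    have e0 : P.card + ((C ×ˢ C).filter fun q => ¬ dist v q.2 < dist v q.1).card
        = (C ×ˢ C).card := by
      rw [hP]; exact Finset.card_filter_add_card_filter_not _
    have e1 : (((C ×ˢ C).filter fun q => ¬ dist v q.2 < dist v q.1).filter
          fun q => dist v q.1 < dist v q.2).card +
        (((C ×ˢ C).filter fun q => ¬ dist v q.2 < dist v q.1).filter
          fun q => ¬ dist v q.1 < dist v q.2).card
        = ((C ×ˢ C).filter fun q => ¬ dist v q.2 < dist v q.1).card :=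
      Finset.card_filter_add_card_filter_not _
    have eP' : ((C ×ˢ C).filter fun q => ¬ dist v q.2 < dist v q.1).filter
        (fun q => dist v q.1 < dist v q.2) = P' := by
      rw [hP', Finset.filter_filter]
      apply Finset.filter_congr
      intro q _
      constructor
      · rintro ⟨-, h⟩; exact h
      · intro h; exact ⟨not_lt.2 h.le, h⟩
    have eE : ((C ×ˢ C).filter fun q => ¬ dist v q.2 < dist v q.1).filter
        (fun q => ¬ dist v q.1 < dist v q.2) = E := by
      rw [hE, Finset.filter_filter]
    rw [eP', eE] at e1
    rw [← hm] at *
    have e2 : (C ×ˢ C).card = m * m := by rw [Finset.card_product, hm]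
    omega
  have hswap : P'.card = P.card := by
    rw [hP', hP]
    apply Finset.card_bij (fun q _ => Prod.swap q)
    · rintro ⟨q₁, q₂⟩ hq
      simp only [Finset.mem_filter, Finset.mem_product] at hq ⊢
      exact ⟨⟨hq.1.2, hq.1.1⟩, hq.2⟩
    · rintro ⟨q₁, q₂⟩ - ⟨r₁, r₂⟩ - h
      simpa [Prod.ext_iff, and_comm] using h
    · rintro ⟨q₁, q₂⟩ hq
      simp only [Finset.mem_filter, Finset.mem_product] at hq
      exact ⟨(q₂, q₁), by simp [Finset.mem_filter, Finset.mem_product, hq.1.1, hq.1.2, hq.2], rfl⟩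
  have hEcard : m + 2 ≤ E.card := by
    have hsub : insert (c, c') (insert (c', c) (C.image fun a => (a, a))) ⊆ E := by
      intro q hq
      simp only [Finset.mem_insert, Finset.mem_image] at hq
      rw [hE, Finset.mem_filter, Finset.mem_product]
      rcases hq with rfl | rfl | ⟨a, ha, rfl⟩
      · exact ⟨⟨hc, hc'⟩, by simp [hdd]⟩
      · exact ⟨⟨hc', hc⟩, by simp [hdd]⟩
      · exact ⟨⟨ha, ha⟩, by simp⟩
    have hcardins : (insert (c, c') (insert (c', c) (C.image fun a => (a, a)))).card = m + 2 := by
      rw [Finset.card_insert_of_notMem, Finset.card_insert_of_notMem]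
      · rw [Finset.card_image_of_injective _ (fun a b h => (Prod.ext_iff.1 h).1), hm]
      · intro h
        obtain ⟨a, -, ha⟩ := Finset.mem_image.1 h
        exact hne ((Prod.ext_iff.1 ha).2.symm.trans (Prod.ext_iff.1 ha).1)
      · intro h
        rcases Finset.mem_insert.1 h with h | h
        · exact hne (by simpa using (Prod.ext_iff.1 h).1)
        · obtain ⟨a, -, ha⟩ := Finset.mem_image.1 h
          exact hne ((Prod.ext_iff.1 ha).1.symm.trans (Prod.ext_iff.1 ha).2)
    rw [← hcardins]
    exact Finset.card_le_card hsub
  have h2 : 2 * m.choose 2 = m * (m - 1) := two_mul_choose_two m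
  have h3 : m * (m - 1) + m = m * m := by
    cases m with
    | zero => rfl
    | succ k => simp [Nat.succ_sub_one]; ring
  omega

lemma gap_pick {E : Set ℝ} (hE : E.Finite) (t : ℝ) :
    ∃ x, t < x ∧ ∀ u ∈ E, t < u → x < u := by
  classical
  by_cases hne : (E ∩ Set.Ioi t).Nonempty
  · obtain ⟨m, hm, hmin⟩ := Set.exists_min_image _ id (hE.inter_of_left _) hne
    simp only [Set.mem_inter_iff, Set.mem_Ioi] at hm
    refine ⟨(t + m) / 2, by linarith, ?_⟩
    intro u hu htu
    have : m ≤ u := hmin u ⟨hu, htu⟩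
    linarith
  · exact ⟨t + 1, by linarith, fun u hu htu => absurd ⟨hu, htu⟩ (fun h => hne ⟨u, h⟩)⟩

lemma pick_in_Ioo {a b : ℝ} (hab : a < b) {E : Set ℝ} (hE : E.Finite) :
    ∃ y, a < y ∧ y < b ∧ y ∉ E := by
  have : (Set.Ioo a b \ E).Infinite := (Set.Ioo_infinite hab).diff hE
  obtain ⟨y, hy⟩ := this.nonempty
  exact ⟨y, hy.1.1, hy.1.2, hy.2⟩

lemma sorted_enum {β : Type*} [DecidableEq β] [Nonempty β] (U : Finset β) (D : β → ℝ)
    (hinj : Set.InjOn D ↑U) {N : ℕ} (hN : U.card = N) :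
    ∃ σ : Fin N → β, (∀ i, σ i ∈ U) ∧ (∀ u ∈ U, ∃ i, σ i = u) ∧
      StrictMono (fun i => D (σ i)) := by
  classical
  set s : Finset ℝ := U.image D with hs
  have hcard : s.card = N := by rw [hs, Finset.card_image_of_injOn hinj, hN]
  set iso := s.orderIsoOfFin hcard with hiso
  set σ : Fin N → β := fun i => Function.invFunOn D ↑U (iso i) with hσ
  have hmem : ∀ i : Fin N, ∃ a ∈ (↑U : Set β), D a = iso i := by
    intro i
    obtain ⟨a, ha, hDa⟩ := Finset.mem_image.1 (iso i).2
    exact ⟨a, ha, hDa⟩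
  have hσU : ∀ i, σ i ∈ U := fun i => Function.invFunOn_mem (hmem i)
  have hDσ : ∀ i, D (σ i) = iso i := fun i => Function.invFunOn_eq (hmem i)
  refine ⟨σ, hσU, ?_, ?_⟩
  · intro u hu
    have : D u ∈ s := Finset.mem_image_of_mem D hu
    obtain ⟨i, hi⟩ := iso.surjective ⟨D u, this⟩
    refine ⟨i, hinj (hσU i) hu ?_⟩
    rw [hDσ i, hi]
  · intro i j hij
    have := iso.strictMono hij
    simp only [hDσ]
    exact Subtype.coe_lt_coe.2 this

lemma Dcheck_inl {e : ℕ} (v₁ v₂ : EuclideanSpace ℝ (Fin e)) (x y : ℝ) (c : EuclideanSpace ℝ (Fin e)) :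
    Dcheck v₁ v₂ x y (Sum.inl c) = theta (dist v₁ c) x := by
  simp [Dcheck, theta, dist_comm]

lemma Dcheck_inr {e : ℕ} (v₁ v₂ : EuclideanSpace ℝ (Fin e)) (x y : ℝ) (c : EuclideanSpace ℝ (Fin e)) :
    Dcheck v₁ v₂ x y (Sum.inr c) = y * dist v₂ c ^ 2 := by
  simp [Dcheck, dist_comm]

/-- For `d ≥ 2` (with `e = d − 1 ≥ 1`), a finite `C ⊆ ℝ^{d−1}` and a good pair
`(v₁, v₂)`: the number of distinct orderings `Σ̌_{(v₁,v₂,x,y)}^{C,C}` as `(x, y)`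
ranges over `ℝ × ℝ_{>0}` (restricted to the values for which the ordering is defined)
is at least `Γ(v₁, v₂)`. -/
theorem card_orderings_of_goodPair (e : ℕ) (he : 1 ≤ e)
    (C : Finset (EuclideanSpace ℝ (Fin e)))
    (v₁ v₂ : EuclideanSpace ℝ (Fin e)) (hgood : GoodPair C v₁ v₂) :
    Gamma C v₁ v₂ ≤
      Nat.card {σ : Fin (C.card + C.card) →
          (EuclideanSpace ℝ (Fin e) ⊕ EuclideanSpace ℝ (Fin e)) |
        Function.Injective σ ∧
        (∀ i, Sum.elim (fun c => c ∈ C) (fun c => c ∈ C) (σ i)) ∧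
        ∃ x y : ℝ, 0 < y ∧ StrictMono fun i => Dcheck v₁ v₂ x y (σ i)} := by
  classical
  obtain ⟨hv₁, hv₂, hdisj, hcard₁, hcard₂, hiii⟩ := hgood
  set S : Set (ℝ × ℝ) :=
    {p : ℝ × ℝ | p.1 ∈ DeltaSet C v₁ ∧ p.2 ∈ DeltaSet C v₂ ∧ p.2 < p.1} with hS
  set T : Set (Fin (C.card + C.card) → (EuclideanSpace ℝ (Fin e)) ⊕ (EuclideanSpace ℝ (Fin e))) :=
    {σ | Function.Injective σ ∧
      (∀ i, Sum.elim (fun c => c ∈ C) (fun c => c ∈ C) (σ i)) ∧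
      ∃ x y : ℝ, 0 < y ∧ StrictMono fun i => Dcheck v₁ v₂ x y (σ i)} with hT
  -- basic distance facts
  have hd₁pos : ∀ c ∈ C, 0 < dist v₁ c := by
    intro c hc; rw [dist_pos]; rintro rfl; exact hv₁ hc
  have hd₂pos : ∀ c ∈ C, 0 < dist v₂ c := by
    intro c hc; rw [dist_pos]; rintro rfl; exact hv₂ hc
  have hinj₁ : Set.InjOn (dist v₁) ↑C := dist_injOn_of_card C v₁ hcard₁
  have hinj₂ : Set.InjOn (dist v₂) ↑C := dist_injOn_of_card C v₂ hcard₂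
  -- S is finite
  have hSfin : S.Finite := by
    have h1 : (DeltaSet C v₁).Finite := by
      rw [DeltaSet, delta_eq_image]; exact Finset.finite_toSet _
    have h2 : (DeltaSet C v₂).Finite := by
      rw [DeltaSet, delta_eq_image]; exact Finset.finite_toSet _
    exact (h1.prod h2).subset (fun p hp => ⟨hp.1, hp.2.1⟩)
  haveI : Finite ↥S := hSfin.to_subtype
  -- T is finite
  have hTfin : T.Finite := by
    have hK : ((Sum.inl '' ↑C ∪ Sum.inr '' ↑C : Set ((EuclideanSpace ℝ (Fin e)) ⊕ (EuclideanSpace ℝ (Fin e))))).Finite :=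
      ((C.finite_toSet.image _).union (C.finite_toSet.image _))
    apply Set.Finite.subset (Set.Finite.pi fun _ : Fin (C.card + C.card) => hK)
    intro σ hσ
    rw [Set.mem_pi]
    intro i _
    have := hσ.2.1 i
    cases hcase : σ i with
    | inl c => rw [hcase] at this; exact Or.inl ⟨c, this, rfl⟩
    | inr c => rw [hcase] at this; exact Or.inr ⟨c, this, rfl⟩
  haveI : Finite ↥T := hTfin.to_subtype
  -- Step A: choose representatives and roots
  have hmain : ∀ p : ↥S, ∃ (ep : ℝ) (c₁ c₂ c₃ c₄ : EuclideanSpace ℝ (Fin e)), c₁ ∈ C ∧ c₂ ∈ C ∧ c₃ ∈ C ∧ c₄ ∈ C ∧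
      dist v₁ c₂ < dist v₁ c₁ ∧ dist v₂ c₄ < dist v₂ c₃ ∧
      (p : ℝ × ℝ).1 = dist v₁ c₁ ^ 2 / dist v₁ c₂ ^ 2 ∧
      (p : ℝ × ℝ).2 = dist v₂ c₃ ^ 2 / dist v₂ c₄ ^ 2 ∧
      theta (dist v₁ c₁) ep / theta (dist v₁ c₂) ep = (p : ℝ × ℝ).2 := by
    intro p
    obtain ⟨hpa, hpb, hplt⟩ := p.2
    obtain ⟨d₁, hd₁, d₂, hd₂, hll₁, haa⟩ := hpa
    obtain ⟨d₃, hd₃, d₄, hd₄, hll₂, hbb⟩ := hpb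
    have h2 : 0 < dist v₁ d₂ := hd₁pos d₂ hd₂
    have h4 : 0 < dist v₂ d₄ := hd₂pos d₄ hd₄
    have hB1 : 1 < (p : ℝ × ℝ).2 := by
      rw [hbb, one_lt_div (by positivity)]; nlinarith
    have hBA : (p : ℝ × ℝ).2 * dist v₁ d₂ ^ 2 < dist v₁ d₁ ^ 2 := by
      have h' : (p : ℝ × ℝ).2 < dist v₁ d₁ ^ 2 / dist v₁ d₂ ^ 2 := haa ▸ hplt
      rwa [lt_div_iff₀ (by positivity)] at h'
    obtain ⟨ept, hep⟩ := ratio_root h2 hll₁ hB1 hBA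
    exact ⟨ept, d₁, d₂, d₃, d₄, hd₁, hd₂, hd₃, hd₄, hll₁, hll₂, haa, hbb, hep⟩
  choose ep c₁ c₂ c₃ c₄ hc₁ hc₂ hc₃ hc₄ hl₁ hl₂ ha hb hroot using hmain
  -- Step B: ep is injective
  have einj : Function.Injective ep := by
    intro p q hpq
    by_cases hcc : (c₁ p, c₂ p) = (c₁ q, c₂ q)
    · have h1 : c₁ p = c₁ q := (Prod.ext_iff.1 hcc).1
      have h2 : c₂ p = c₂ q := (Prod.ext_iff.1 hcc).2
      have hb' : (p : ℝ × ℝ).2 = (q : ℝ × ℝ).2 := by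
        rw [← hroot p, ← hroot q, h1, h2, hpq]
      have ha' : (p : ℝ × ℝ).1 = (q : ℝ × ℝ).1 := by
        rw [ha p, ha q, h1, h2]
      exact Subtype.ext (Prod.ext ha' hb')
    · exact absurd ⟨ep p, c₁ p, c₂ p, c₁ q, c₂ q, hc₁ p, hc₂ p, hc₁ q, hc₂ q, hcc,
        hl₁ p, hl₁ q,
        by rw [hroot p]; exact (p.2).2.1,
        by rw [hpq, hroot q]; exact (q.2).2.1⟩ hiii
  -- Step C: choose x_p
  have hx : ∀ p : ↥S, ∃ x, ep p < x ∧ ∀ q : ↥S, ep p < ep q → x < ep q := by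
    intro p
    obtain ⟨x, hx1, hx2⟩ := gap_pick (Set.finite_range ep) (ep p)
    exact ⟨x, hx1, fun q hq => hx2 (ep q) (Set.mem_range_self q) hq⟩
  choose xp hx1 hx2 using hx
  -- key ratio fact at xp
  have hratio : ∀ p : ↥S, (p : ℝ × ℝ).2 <
      theta (dist v₁ (c₁ p)) (xp p) / theta (dist v₁ (c₂ p)) (xp p) := by
    intro p
    have h := (ratio_strictMono (hd₁pos _ (hc₂ p)) (hl₁ p)) (hx1 p)
    dsimp only at h
    rw [hroot p] at h
    exact h
  -- Step D: choose y_p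
  have hy : ∀ p : ↥S, ∃ y, 0 < y ∧
      theta (dist v₁ (c₂ p)) (xp p) < y * dist v₂ (c₄ p) ^ 2 ∧
      y * dist v₂ (c₃ p) ^ 2 < theta (dist v₁ (c₁ p)) (xp p) ∧
      ∀ c ∈ C, ∀ c' ∈ C, y * dist v₂ c' ^ 2 ≠ theta (dist v₁ c) (xp p) := by
    intro p
    have h2 : 0 < dist v₁ (c₂ p) := hd₁pos _ (hc₂ p)
    have h1 : 0 < dist v₁ (c₁ p) := hd₁pos _ (hc₁ p)
    have h4 : 0 < dist v₂ (c₄ p) := hd₂pos _ (hc₄ p)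
    have h3 : 0 < dist v₂ (c₃ p) := hd₂pos _ (hc₃ p)
    have hth1 := theta_pos (dist v₁ (c₁ p)) (xp p) h1
    have hth2 := theta_pos (dist v₁ (c₂ p)) (xp p) h2
    have hlu : theta (dist v₁ (c₂ p)) (xp p) / dist v₂ (c₄ p) ^ 2 <
        theta (dist v₁ (c₁ p)) (xp p) / dist v₂ (c₃ p) ^ 2 := by
      rw [div_lt_div_iff₀ (by positivity) (by positivity)]
      have h := hratio p
      rw [hb p] at h
      rw [div_lt_div_iff₀ (by positivity) (by positivity)] at h
      nlinarith
    have hbad : ((fun q : (EuclideanSpace ℝ (Fin e)) × (EuclideanSpace ℝ (Fin e)) => theta (dist v₁ q.1) (xp p) / dist v₂ q.2 ^ 2) ''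
        (↑C ×ˢ ↑C)).Finite := (C.finite_toSet.prod C.finite_toSet).image _
    obtain ⟨y, hy1, hy2, hy3⟩ := pick_in_Ioo hlu hbad
    have hy0 : 0 < y := lt_trans (by positivity) hy1
    refine ⟨y, hy0, ?_, ?_, ?_⟩
    · rw [div_lt_iff₀ (by positivity)] at hy1; linarith
    · rw [lt_div_iff₀ (by positivity)] at hy2; linarith
    · intro c hc c' hc' heq
      apply hy3
      refine ⟨(c, c'), ⟨hc, hc'⟩, ?_⟩
      have h' : 0 < dist v₂ c' := hd₂pos _ hc'
      rw [div_eq_iff (by positivity : (0:ℝ) < dist v₂ c' ^ 2).ne']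
      linarith [heq]
  choose yp hy0 hy1 hy2 hy3 using hy
  -- Step E: the sorted enumeration
  have hσ : ∀ p : ↥S, ∃ σ : Fin (C.card + C.card) → (EuclideanSpace ℝ (Fin e)) ⊕ (EuclideanSpace ℝ (Fin e)),
      (∀ i, σ i ∈ C.disjSum C) ∧ (∀ u ∈ C.disjSum C, ∃ i, σ i = u) ∧
      StrictMono (fun i => Dcheck v₁ v₂ (xp p) (yp p) (σ i)) := by
    intro p
    apply sorted_enum (C.disjSum C) (Dcheck v₁ v₂ (xp p) (yp p)) _ (Finset.card_disjSum C C)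
    intro u hu u' hu' huu
    rw [Finset.mem_coe] at hu hu'
    match u, u' with
    | Sum.inl c, Sum.inl c' =>
      have hc : c ∈ C := Finset.inl_mem_disjSum.1 hu
      have hc' : c' ∈ C := Finset.inl_mem_disjSum.1 hu'
      rw [Dcheck_inl, Dcheck_inl, theta, theta, sub_left_inj] at huu
      have h1 : (0:ℝ) ≤ (xp p) ^ 2 + dist v₁ c ^ 2 := by positivity
      have h2 : (0:ℝ) ≤ (xp p) ^ 2 + dist v₁ c' ^ 2 := by positivity
      have hsq : (xp p) ^ 2 + dist v₁ c ^ 2 = (xp p) ^ 2 + dist v₁ c' ^ 2 := by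
        have h3 := congrArg (fun z => z ^ 2) huu
        simpa [Real.sq_sqrt h1, Real.sq_sqrt h2] using h3
      have hsq' : dist v₁ c ^ 2 = dist v₁ c' ^ 2 := by linarith
      have hdist : dist v₁ c = dist v₁ c' := by
        have h4 := congrArg Real.sqrt hsq'
        rwa [Real.sqrt_sq dist_nonneg, Real.sqrt_sq dist_nonneg] at h4
      rw [hinj₁ hc hc' hdist]
    | Sum.inl c, Sum.inr c' =>
      have hc : c ∈ C := Finset.inl_mem_disjSum.1 hu
      have hc' : c' ∈ C := Finset.inr_mem_disjSum.1 hu'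
      rw [Dcheck_inl, Dcheck_inr] at huu
      exact absurd huu.symm (hy3 p c hc c' hc')
    | Sum.inr c, Sum.inl c' =>
      have hc : c ∈ C := Finset.inr_mem_disjSum.1 hu
      have hc' : c' ∈ C := Finset.inl_mem_disjSum.1 hu'
      rw [Dcheck_inl, Dcheck_inr] at huu
      exact absurd huu (hy3 p c' hc' c hc)
    | Sum.inr c, Sum.inr c' =>
      have hc : c ∈ C := Finset.inr_mem_disjSum.1 hu
      have hc' : c' ∈ C := Finset.inr_mem_disjSum.1 hu'
      rw [Dcheck_inr, Dcheck_inr] at huu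
      have hsq' : dist v₂ c ^ 2 = dist v₂ c' ^ 2 :=
        mul_left_cancel₀ (hy0 p).ne' huu
      have hdist : dist v₂ c = dist v₂ c' := by
        have h4 := congrArg Real.sqrt hsq'
        rwa [Real.sqrt_sq dist_nonneg, Real.sqrt_sq dist_nonneg] at h4
      rw [hinj₂ hc hc' hdist]
  choose σf hσmem hσsurj hσmono using hσ
  -- F : S → T
  have hσinj : ∀ p : ↥S, Function.Injective (σf p) := by
    intro p i j hij
    exact (hσmono p).injective (congrArg (Dcheck v₁ v₂ (xp p) (yp p)) hij)
  have hmemT : ∀ p : ↥S, σf p ∈ T := by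
    intro p
    refine ⟨hσinj p, ?_, xp p, yp p, hy0 p, hσmono p⟩
    intro i
    have := hσmem p i
    cases hcase : σf p i with
    | inl c => rw [hcase] at this; simpa using (Finset.mem_disjSum.1 this)
    | inr c => rw [hcase] at this; simpa using (Finset.mem_disjSum.1 this)
  set F : ↥S → ↥T := fun p => ⟨σf p, hmemT p⟩ with hF
  -- the key claim
  have claim : ∀ p q : ↥S, σf p = σf q → ¬ (ep q < ep p) := by
    intro p q hσeq hlt
    have hxq_lt : xp q < ep p := hx2 q p hlt
    obtain ⟨i, hi⟩ := hσsurj p (Sum.inl (c₂ p)) (Finset.inl_mem_disjSum.2 (hc₂ p))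
    obtain ⟨j, hj⟩ := hσsurj p (Sum.inr (c₄ p)) (Finset.inr_mem_disjSum.2 (hc₄ p))
    obtain ⟨k, hk⟩ := hσsurj p (Sum.inr (c₃ p)) (Finset.inr_mem_disjSum.2 (hc₃ p))
    obtain ⟨l, hl⟩ := hσsurj p (Sum.inl (c₁ p)) (Finset.inl_mem_disjSum.2 (hc₁ p))
    have hij : i < j := by
      rw [← (hσmono p).lt_iff_lt]
      show Dcheck v₁ v₂ (xp p) (yp p) (σf p i) < Dcheck v₁ v₂ (xp p) (yp p) (σf p j)
      rw [hi, hj, Dcheck_inl, Dcheck_inr]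
      exact hy1 p
    have hkl : k < l := by
      rw [← (hσmono p).lt_iff_lt]
      show Dcheck v₁ v₂ (xp p) (yp p) (σf p k) < Dcheck v₁ v₂ (xp p) (yp p) (σf p l)
      rw [hk, hl, Dcheck_inr, Dcheck_inl]
      exact hy2 p
    -- transfer to q's parameters
    have hq1 : theta (dist v₁ (c₂ p)) (xp q) < yp q * dist v₂ (c₄ p) ^ 2 := by
      have := hσmono q hij
      simp only [← hσeq] at this
      rw [hi, hj, Dcheck_inl, Dcheck_inr] at this
      exact this
    have hq2 : yp q * dist v₂ (c₃ p) ^ 2 < theta (dist v₁ (c₁ p)) (xp q) := by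
      have := hσmono q hkl
      simp only [← hσeq] at this
      rw [hk, hl, Dcheck_inr, Dcheck_inl] at this
      exact this
    -- derive B_p < ratio at xp q
    have h2 : 0 < dist v₁ (c₂ p) := hd₁pos _ (hc₂ p)
    have h4 : 0 < dist v₂ (c₄ p) := hd₂pos _ (hc₄ p)
    have h3 : 0 < dist v₂ (c₃ p) := hd₂pos _ (hc₃ p)
    have hth2 := theta_pos (dist v₁ (c₂ p)) (xp q) h2
    have hBr : (p : ℝ × ℝ).2 <
        theta (dist v₁ (c₁ p)) (xp q) / theta (dist v₁ (c₂ p)) (xp q) := by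
      rw [hb p, div_lt_div_iff₀ (by positivity) hth2]
      have hq0 := hy0 q
      nlinarith [mul_lt_mul_of_pos_left hq1 (by positivity : (0:ℝ) < dist v₂ (c₃ p) ^ 2),
        mul_lt_mul_of_pos_right hq2 (by positivity : (0:ℝ) < dist v₂ (c₄ p) ^ 2)]
    -- hence ep p < xp q, contradiction
    have hmono := ratio_strictMono h2 (hl₁ p)
    have : ep p < xp q := by
      rw [← hmono.lt_iff_lt]
      show theta (dist v₁ (c₁ p)) (ep p) / theta (dist v₁ (c₂ p)) (ep p) <
        theta (dist v₁ (c₁ p)) (xp q) / theta (dist v₁ (c₂ p)) (xp q)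
      rw [hroot p]
      exact hBr
    linarith
  have Finj : Function.Injective F := by
    intro p q hpq
    have hσeq : σf p = σf q := congrArg Subtype.val hpq
    have h1 := claim p q hσeq
    have h2 := claim q p hσeq.symm
    exact einj (le_antisymm (not_lt.1 h1) (not_lt.1 h2))
  exact Nat.card_le_card_of_injective F Finj
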